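/- Let b be close to 1/2 and ξ, ξ₁ ∈ ℝ² with |ξ| ∼ N ≫ 1, N₂ ≥ 1. Then sup_{τ ∈ ℝ} ∫_{|ξ₂| ≲ N₂} ⟨τ + |ξ|² + 2ξ·ξ₂⟩^{−(4b−1)} dξ₂ ≲ N₂^{3−4b} N^{−(4b−1)} over ξ₂ ∈ ℝ². -/

import Mathlib

open MeasureTheory RealInnerProductSpace

noncomputable def jb (x : ℝ) : ℝ := Real.sqrt (1 + x ^ 2)

lemma jb_one_le (x : ℝ) : 1 ≤ jb x := by
  have h := Real.sqrt_le_sqrt (show (1:ℝ) ≤ 1 + x ^ 2 by nlinarith)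
  simpa [jb] using h

lemma jb_pos (x : ℝ) : 0 < jb x := lt_of_lt_of_le one_pos (jb_one_le x)

lemma abs_le_jb (x : ℝ) : |x| ≤ jb x := by
  rw [jb, ← Real.sqrt_sq_eq_abs]
  exact Real.sqrt_le_sqrt (by nlinarith)

lemma jb_continuous : Continuous jb := by
  apply Real.continuous_sqrt.comp; continuity

lemma rpow_subadd {x y q : ℝ} (hx : 0 ≤ x) (hy : 0 ≤ y) (hq0 : 0 ≤ q) (hq1 : q ≤ 1) :
    (x + y) ^ q ≤ x ^ q + y ^ q := by
  have h := NNReal.rpow_add_le_add_rpow x.toNNReal y.toNNReal hq0 hq1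
  have h2 := NNReal.coe_le_coe.2 h
  push_cast at h2
  rwa [Real.coe_toNNReal x hx, Real.coe_toNNReal y hy] at h2

lemma abs_rpow_ii {p : ℝ} (hp : p < 1) (a b : ℝ) :
    IntervalIntegrable (fun u : ℝ => |u| ^ (-p)) volume a b := by
  have h0 : ∀ c : ℝ, 0 ≤ c → IntervalIntegrable (fun u : ℝ => |u| ^ (-p)) volume 0 c := by
    intro c hc
    have h := intervalIntegral.intervalIntegrable_rpow' (a := 0) (b := c) (r := -p)
      (by linarith)
    rw [intervalIntegrable_iff, Set.uIoc_of_le hc] at h ⊢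
    refine h.congr_fun (fun u hu => ?_) measurableSet_Ioc
    rw [abs_of_pos hu.1]
  have hall : ∀ c : ℝ, IntervalIntegrable (fun u : ℝ => |u| ^ (-p)) volume 0 c := by
    intro c
    rcases le_total 0 c with h | h
    · exact h0 c h
    · have h1 := h0 (-c) (by linarith)
      have h2 := (IntervalIntegrable.iff_comp_neg enorm_ne_top).mp h1
      simp only [abs_neg, neg_zero, neg_neg] at h2
      exact h2
  exact (hall a).symm.trans (hall b)

lemma onesided {p : ℝ} (hp0 : 0 < p) (hp1 : p < 1) {a b : ℝ} (ha : 0 ≤ a) (hab : a ≤ b) :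
    ∫ u in a..b, |u| ^ (-p) ≤ (b - a) ^ (1 - p) / (1 - p) := by
  have h1 : ∫ u in a..b, |u| ^ (-p) = ∫ u in a..b, u ^ (-p) := by
    apply intervalIntegral.integral_congr
    intro u hu
    rw [Set.uIcc_of_le hab] at hu
    simp only
    rw [abs_of_nonneg (le_trans ha hu.1)]
  rw [h1, integral_rpow (Or.inl (by linarith))]
  have key : b ^ (-p + 1) - a ^ (-p + 1) ≤ (b - a) ^ (1 - p) := by
    have h2 := rpow_subadd (x := a) (y := b - a) ha (by linarith) (by linarith : (0:ℝ) ≤ 1 - p)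
      (by linarith)
    rw [add_sub_cancel] at h2
    have he : -p + 1 = 1 - p := by ring
    rw [he]
    linarith
  have hpos : 0 < -p + 1 := by linarith
  rw [div_le_div_iff₀ hpos (by linarith : (0:ℝ) < 1 - p)]
  calc (b ^ (-p + 1) - a ^ (-p + 1)) * (1 - p) ≤ (b - a) ^ (1 - p) * (1 - p) := by
        nlinarith [key]
    _ = (b - a) ^ (1 - p) * (-p + 1) := by ring

lemma int_abs_rpow {p : ℝ} (hp0 : 0 < p) (hp1 : p < 1) {a b : ℝ} (hab : a ≤ b) :
    ∫ u in a..b, |u| ^ (-p) ≤ 2 * (b - a) ^ (1 - p) / (1 - p) := by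
  have h1p : (0:ℝ) < 1 - p := by linarith
  have hnn : 0 ≤ (b - a) ^ (1 - p) / (1 - p) :=
    div_nonneg (Real.rpow_nonneg (by linarith) _) h1p.le
  have hsum : 2 * (b - a) ^ (1 - p) / (1 - p)
      = (b - a) ^ (1 - p) / (1 - p) + (b - a) ^ (1 - p) / (1 - p) := by ring
  rcases le_total 0 a with ha | ha
  · have h := onesided hp0 hp1 ha hab
    linarith
  · rcases le_total b 0 with hb | hb
    · have hneg : ∫ u in a..b, |u| ^ (-p) = ∫ u in -b..-a, |u| ^ (-p) := by
        have h := intervalIntegral.integral_comp_neg (a := a) (b := b)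
          (fun u : ℝ => |u| ^ (-p))
        simp only [abs_neg] at h
        exact h
      rw [hneg]
      have h := onesided hp0 hp1 (by linarith : (0:ℝ) ≤ -b) (by linarith : -b ≤ -a)
      have he : -a - -b = b - a := by ring
      rw [he] at h
      linarith
    · have hsplit : ∫ u in a..b, |u| ^ (-p)
          = (∫ u in a..(0:ℝ), |u| ^ (-p)) + ∫ u in (0:ℝ)..b, |u| ^ (-p) :=
        (intervalIntegral.integral_add_adjacent_intervals (abs_rpow_ii hp1 a 0)
          (abs_rpow_ii hp1 0 b)).symm
      rw [hsplit]
      have hmono : ∀ x y : ℝ, 0 ≤ x → x ≤ y → x ^ (1 - p) ≤ y ^ (1 - p) := fun x y hx hxy =>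
        Real.rpow_le_rpow hx hxy h1p.le
      have hb' := onesided hp0 hp1 (le_refl (0:ℝ)) hb
      rw [sub_zero] at hb'
      have ha2 : ∫ u in a..(0:ℝ), |u| ^ (-p) = ∫ u in (0:ℝ)..-a, |u| ^ (-p) := by
        have h := intervalIntegral.integral_comp_neg (a := a) (b := (0:ℝ))
          (fun u : ℝ => |u| ^ (-p))
        simp only [abs_neg, neg_zero] at h
        exact h
      have ha' := onesided hp0 hp1 (le_refl (0:ℝ)) (by linarith : (0:ℝ) ≤ -a)
      rw [sub_zero] at ha'
      rw [ha2]
      have e1 : b ^ (1 - p) ≤ (b - a) ^ (1 - p) := hmono _ _ hb (by linarith)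
      have e2 : (-a) ^ (1 - p) ≤ (b - a) ^ (1 - p) := hmono _ _ (by linarith) (by linarith)
      have d1 : b ^ (1 - p) / (1 - p) ≤ (b - a) ^ (1 - p) / (1 - p) :=
        (div_le_div_iff_of_pos_right h1p).mpr e1
      have d2 : (-a) ^ (1 - p) / (1 - p) ≤ (b - a) ^ (1 - p) / (1 - p) :=
        (div_le_div_iff_of_pos_right h1p).mpr e2
      linarith

lemma oneD {p : ℝ} (hp0 : 0 < p) (hp1 : p < 1) {M c N₂ : ℝ} (hM : 1/2 ≤ M) (hN₂ : 1 ≤ N₂) :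
    ∫ t in Set.Icc (-N₂) N₂, jb (c + 2 * M * t) ^ (-p)
      ≤ 4 / (1 - p) * (M ^ (-p) * N₂ ^ (1 - p)) := by
  have hM0 : (0:ℝ) < M := by linarith
  have h2M : (2 * M : ℝ) ≠ 0 := by positivity
  have h1p : (0:ℝ) < 1 - p := by linarith
  have hIcc : ∫ t in Set.Icc (-N₂) N₂, jb (c + 2 * M * t) ^ (-p)
      = ∫ t in (-N₂)..N₂, jb (c + 2 * M * t) ^ (-p) := by
    rw [MeasureTheory.integral_Icc_eq_integral_Ioc,
      intervalIntegral.integral_of_le (by linarith : -N₂ ≤ N₂)]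
  rw [hIcc]
  have hsub := intervalIntegral.integral_comp_add_mul (a := -N₂) (b := N₂)
    (fun u : ℝ => jb u ^ (-p)) h2M c
  rw [hsub, smul_eq_mul]
  set a' : ℝ := c + 2 * M * -N₂ with ha'
  set b' : ℝ := c + 2 * M * N₂ with hb'
  have hab : a' ≤ b' := by rw [ha', hb']; nlinarith
  have hcont : Continuous (fun u : ℝ => jb u ^ (-p)) :=
    jb_continuous.rpow_const fun x => Or.inl (jb_pos x).ne'
  have hae : (fun u : ℝ => jb u ^ (-p)) ≤ᵐ[volume] fun u : ℝ => |u| ^ (-p) := by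
    have h0 : ∀ᵐ u : ℝ, u ≠ 0 := by
      rw [MeasureTheory.ae_iff]
      have : {u : ℝ | ¬u ≠ 0} = {0} := by ext u; simp
      rw [this]
      exact Real.volume_singleton
    filter_upwards [h0] with u hu
    exact Real.rpow_le_rpow_of_nonpos (abs_pos.mpr hu) (abs_le_jb u) (by linarith)
  have hcmp : ∫ u in a'..b', jb u ^ (-p) ≤ ∫ u in a'..b', |u| ^ (-p) :=
    intervalIntegral.integral_mono_ae hab (hcont.intervalIntegrable a' b')
      (abs_rpow_ii hp1 a' b') hae
  have hkey := int_abs_rpow hp0 hp1 hab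
  have hlen : b' - a' = 4 * M * N₂ := by rw [ha', hb']; ring
  rw [hlen] at hkey
  have hsplit : ((4:ℝ) * M * N₂) ^ (1 - p) = (4:ℝ) ^ (1 - p) * M ^ (1 - p) * N₂ ^ (1 - p) := by
    rw [Real.mul_rpow (by positivity) (by linarith), Real.mul_rpow (by norm_num) hM0.le]
  have h4 : (4:ℝ) ^ (1 - p) ≤ 4 := by
    calc (4:ℝ) ^ (1 - p) ≤ (4:ℝ) ^ (1:ℝ) :=
          Real.rpow_le_rpow_of_exponent_le (by norm_num) (by linarith)
      _ = 4 := Real.rpow_one 4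
  have hMsplit : M ^ (1 - p) = M * M ^ (-p) := by
    rw [show (1 - p : ℝ) = 1 + -p by ring, Real.rpow_add hM0, Real.rpow_one]
  have hnn1 : (0:ℝ) ≤ M ^ (1 - p) := Real.rpow_nonneg hM0.le _
  have hnn2 : (0:ℝ) ≤ N₂ ^ (1 - p) := Real.rpow_nonneg (by linarith) _
  have hnn3 : (0:ℝ) ≤ M ^ (-p) := Real.rpow_nonneg hM0.le _
  calc (2 * M)⁻¹ * ∫ u in a'..b', jb u ^ (-p)
      ≤ (2 * M)⁻¹ * (2 * ((4:ℝ) ^ (1 - p) * M ^ (1 - p) * N₂ ^ (1 - p)) / (1 - p)) := by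
        have := le_trans hcmp hkey
        rw [hsplit] at this
        have hinv : (0:ℝ) ≤ (2 * M)⁻¹ := by positivity
        exact mul_le_mul_of_nonneg_left this hinv
    _ ≤ (2 * M)⁻¹ * (2 * ((4:ℝ) * M ^ (1 - p) * N₂ ^ (1 - p)) / (1 - p)) := by
        gcongr
    _ = 4 / (1 - p) * (M ^ (-p) * N₂ ^ (1 - p)) := by
        rw [hMsplit]
        field_simp

lemma coord_le_norm (y : EuclideanSpace ℝ (Fin 2)) (i : Fin 2) : |y i| ≤ ‖y‖ := by
  rw [EuclideanSpace.norm_eq, ← Real.sqrt_sq_eq_abs]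
  apply Real.sqrt_le_sqrt
  have h := Finset.single_le_sum (f := fun j => ‖y j‖ ^ 2)
    (fun j _ => sq_nonneg _) (Finset.mem_univ i)
  simpa [Real.norm_eq_abs, sq_abs] using h

set_option maxHeartbeats 1000000 in
theorem stmt15 (b : ℝ) (hb1 : 1 / 4 < b) (hb2 : b < 1 / 2) :
    ∃ C > 0, ∀ N N₂ : ℝ, 1 ≤ N → 1 ≤ N₂ →
      ∀ ξ : EuclideanSpace ℝ (Fin 2), N / 2 ≤ ‖ξ‖ → ‖ξ‖ ≤ 2 * N →
      ∀ τ : ℝ,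
      (∫ ξ₂ in {ξ₂ : EuclideanSpace ℝ (Fin 2) | ‖ξ₂‖ ≤ N₂},
          (jb (τ + ‖ξ‖ ^ 2 + 2 * ⟪ξ, ξ₂⟫)) ^ (-(4 * b - 1))) ≤
        C * N₂ ^ (3 - 4 * b) * N ^ (-(4 * b - 1)) := by
  set p : ℝ := 4 * b - 1 with hp
  have hp0 : 0 < p := by rw [hp]; linarith
  have hp1 : p < 1 := by rw [hp]; linarith
  have h1p : (0:ℝ) < 1 - p := by linarith
  refine ⟨16 / (1 - p), by positivity, ?_⟩
  intro N N₂ hN hN₂ ξ hξ1 hξ2 τ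
  have hM0 : (0:ℝ) < ‖ξ‖ := by linarith
  have hMhalf : (1:ℝ)/2 ≤ ‖ξ‖ := by linarith
  set M : ℝ := ‖ξ‖ with hMdef
  have hMne : M ≠ 0 := hM0.ne'
  -- orthonormal basis with B 0 = M⁻¹ • ξ
  have hcard : Module.finrank ℝ (EuclideanSpace ℝ (Fin 2)) = Fintype.card (Fin 2) :=
    finrank_euclideanSpace
  have horth : Orthonormal ℝ
      (({0} : Set (Fin 2)).restrict (fun _ : Fin 2 => (M⁻¹ : ℝ) • ξ)) := by
    rw [orthonormal_iff_ite]
    rintro ⟨i, hi⟩ ⟨j, hj⟩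
    simp only [Set.mem_singleton_iff] at hi hj
    have hij : (⟨i, hi⟩ : ({0} : Set (Fin 2))) = ⟨j, hj⟩ := by
      apply Subtype.ext; simp [hi, hj]
    rw [if_pos hij]
    show ⟪(M⁻¹ : ℝ) • ξ, (M⁻¹ : ℝ) • ξ⟫ = 1
    rw [real_inner_smul_left, real_inner_smul_right, real_inner_self_eq_norm_mul_norm]
    rw [← hMdef]
    field_simp
  obtain ⟨B, hB⟩ := horth.exists_orthonormalBasis_extension_of_card_eq hcard
  have hB0 : B 0 = (M⁻¹ : ℝ) • ξ := hB 0 rfl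
  set T := B.repr.symm with hT
  have hTmp : MeasurePreserving T := B.measurePreserving_repr_symm
  have hTemb : MeasurableEmbedding T := T.toHomeomorph.measurableEmbedding
  set S : Set (EuclideanSpace ℝ (Fin 2)) := {ξ₂ | ‖ξ₂‖ ≤ N₂} with hS
  have hpre : T ⁻¹' S = S := by
    ext y
    simp only [hS, Set.mem_preimage, Set.mem_setOf_eq, T.norm_map]
  have hinner : ∀ y : EuclideanSpace ℝ (Fin 2), ⟪ξ, T y⟫ = M * y 0 := by
    intro y
    have h1 : ξ = M • B 0 := by
      rw [hB0, smul_smul, mul_inv_cancel₀ hMne, one_smul]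
    calc ⟪ξ, T y⟫ = ⟪M • B 0, T y⟫ := by rw [← h1]
      _ = M * ⟪B 0, T y⟫ := real_inner_smul_left _ _ _
      _ = M * (B.repr (T y) 0) := by rw [B.repr_apply_apply (T y) 0]
      _ = M * y 0 := by rw [hT, LinearIsometryEquiv.apply_symm_apply]
  set g : ℝ → ℝ := fun t => jb (τ + M ^ 2 + 2 * M * t) ^ (-p) with hg
  have step1 : (∫ ξ₂ in S, (jb (τ + ‖ξ‖ ^ 2 + 2 * ⟪ξ, ξ₂⟫)) ^ (-p))
      = ∫ y in S, g (y 0) := by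
    rw [← hTmp.setIntegral_preimage_emb hTemb
      (fun ξ₂ => (jb (τ + ‖ξ‖ ^ 2 + 2 * ⟪ξ, ξ₂⟫)) ^ (-p)) S, hpre]
    apply integral_congr_ae
    apply Filter.Eventually.of_forall
    intro y
    simp only [hg]
    rw [hinner y, ← hMdef]
    ring_nf
  rw [step1]
  have hgcont : Continuous g :=
    (jb_continuous.comp (by continuity)).rpow_const fun x => Or.inl (jb_pos _).ne'
  have hgnn : ∀ t, 0 ≤ g t := fun t => Real.rpow_nonneg (jb_pos _).le _
  have hgle1 : ∀ t, g t ≤ 1 := fun t =>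
    Real.rpow_le_one_of_one_le_of_nonpos (jb_one_le _) (by linarith)
  set ψ : EuclideanSpace ℝ (Fin 2) ≃ᵐ ℝ × ℝ :=
    (MeasurableEquiv.toLp 2 (Fin 2 → ℝ)).symm.trans MeasurableEquiv.finTwoArrow with hψdef
  have hψmp : MeasurePreserving ψ :=
    (volume_preserving_finTwoArrow ℝ).comp
      (EuclideanSpace.volume_preserving_symm_measurableEquiv_toLp (Fin 2))
  set Q : Set (ℝ × ℝ) := (Set.Icc (-N₂) N₂) ×ˢ (Set.Icc (-N₂) N₂) with hQ
  have hQm : MeasurableSet Q := measurableSet_Icc.prod measurableSet_Icc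
  have hQfin : volume (ψ ⁻¹' Q) ≠ ⊤ := by
    rw [hψmp.measure_preimage hQm.nullMeasurableSet, hQ, Measure.volume_eq_prod,
      Measure.prod_prod, Real.volume_Icc]
    exact ENNReal.mul_ne_top ENNReal.ofReal_ne_top ENNReal.ofReal_ne_top
  have hmble : Measurable (fun y : EuclideanSpace ℝ (Fin 2) => g (y 0)) :=
    hgcont.measurable.comp (measurable_fst.comp ψ.measurable)
  have hint : IntegrableOn (fun y : EuclideanSpace ℝ (Fin 2) => g (y 0)) (ψ ⁻¹' Q) := by
    apply Measure.integrableOn_of_bounded (M := 1) hQfin hmble.aestronglyMeasurable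
    apply Filter.Eventually.of_forall
    intro y
    rw [Real.norm_eq_abs, abs_of_nonneg (hgnn _)]
    exact hgle1 _
  have hsubQ : S ⊆ ψ ⁻¹' Q := by
    intro y hy
    have h0 : |y 0| ≤ N₂ := le_trans (coord_le_norm y 0) hy
    have h1 : |y 1| ≤ N₂ := le_trans (coord_le_norm y 1) hy
    have h0' := abs_le.mp h0
    have h1' := abs_le.mp h1
    exact ⟨⟨h0'.1, h0'.2⟩, ⟨h1'.1, h1'.2⟩⟩
  have step2 : ∫ y in S, g (y 0) ≤ ∫ y in ψ ⁻¹' Q, g (y 0) :=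
    setIntegral_mono_set hint (Filter.Eventually.of_forall fun y => hgnn _)
      (HasSubset.Subset.eventuallyLE hsubQ)
  have step3 : ∫ y in ψ ⁻¹' Q, g (y 0) = ∫ q in Q, g q.1 :=
    hψmp.setIntegral_preimage_emb ψ.measurableEmbedding (fun q => g q.1) Q
  have hone : ∫ _ in Set.Icc (-N₂) N₂, (1:ℝ) = 2 * N₂ := by
    rw [setIntegral_const, smul_eq_mul, mul_one, Real.volume_real_Icc,
      max_eq_left (by linarith : (0:ℝ) ≤ N₂ - -N₂)]
    ring
  have step4 : ∫ q in Q, g q.1 = (∫ t in Set.Icc (-N₂) N₂, g t) * (2 * N₂) := by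
    have hpm := MeasureTheory.setIntegral_prod_mul (μ := volume) (ν := volume) g
      (fun _ : ℝ => (1:ℝ)) (Set.Icc (-N₂) N₂) (Set.Icc (-N₂) N₂)
    simp only [mul_one] at hpm
    rw [hQ, Measure.volume_eq_prod, hpm, hone]
  have step5 := oneD hp0 hp1 (c := τ + M ^ 2) hMhalf hN₂
  have hMp : M ^ (-p) ≤ 2 * N ^ (-p) := by
    have hN0 : (0:ℝ) < N := by linarith
    have h1 : M ^ (-p) ≤ (N / 2) ^ (-p) :=
      Real.rpow_le_rpow_of_nonpos (by positivity) hξ1 (by linarith)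
    have h2 : (N / 2) ^ (-p) = N ^ (-p) * 2 ^ p := by
      rw [Real.div_rpow hN0.le (by norm_num), Real.rpow_neg (by norm_num : (0:ℝ) ≤ 2)]
      field_simp
    have h3 : (2:ℝ) ^ p ≤ 2 := by
      calc (2:ℝ) ^ p ≤ (2:ℝ) ^ (1:ℝ) :=
            Real.rpow_le_rpow_of_exponent_le one_le_two (by linarith)
        _ = 2 := Real.rpow_one 2
    have hNnn : (0:ℝ) ≤ N ^ (-p) := Real.rpow_nonneg hN0.le _
    rw [h2] at h1
    calc M ^ (-p) ≤ N ^ (-p) * 2 ^ p := h1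
      _ ≤ N ^ (-p) * 2 := mul_le_mul_of_nonneg_left h3 hNnn
      _ = 2 * N ^ (-p) := mul_comm _ _
  have hN₂split : N₂ ^ (3 - 4 * b) = N₂ ^ (1 - p) * N₂ := by
    rw [show (3 - 4 * b : ℝ) = (1 - p) + 1 by rw [hp]; ring,
      Real.rpow_add (by linarith : (0:ℝ) < N₂), Real.rpow_one]
  have c1 : (0:ℝ) ≤ 4 / (1 - p) := div_nonneg (by norm_num) h1p.le
  have c2 : (0:ℝ) ≤ N₂ ^ (1 - p) := Real.rpow_nonneg (by linarith) _
  calc ∫ y in S, g (y 0)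
      ≤ (∫ t in Set.Icc (-N₂) N₂, g t) * (2 * N₂) := by
        rw [← step4, ← step3]; exact step2
    _ ≤ (4 / (1 - p) * (M ^ (-p) * N₂ ^ (1 - p))) * (2 * N₂) :=
        mul_le_mul_of_nonneg_right step5 (by linarith)
    _ ≤ (4 / (1 - p) * ((2 * N ^ (-p)) * N₂ ^ (1 - p))) * (2 * N₂) :=
        mul_le_mul_of_nonneg_right (mul_le_mul_of_nonneg_left
          (mul_le_mul_of_nonneg_right hMp c2) c1) (by linarith)
    _ = 16 / (1 - p) * N₂ ^ (3 - 4 * b) * N ^ (-p) := by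
        rw [hN₂split]; ring
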